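/- In the security first model (secure routes preferred above all other criteria), for every attacker m, destination d, and source AS s that under normal conditions (no attack) uses a secure route to d not passing through m, the AS s continues to use a secure route to d during m's attack. (Protocol downgrade attacks are impossible in the security first model.) -/

import Mathlib

open scoped Classical

namespace SBGP

/-- Business relationship of a neighbor, from the point of view of a given AS. -/
inductive Rel
  | customer
  | peer
  | provider
deriving DecidableEq

/-- The three positions at which the secure-route preference step can be inserted. -/
inductive SecModel
  | first
  | second
  | third
deriving DecidableEq

/-- An AS-level graph with business relationships on its edges. -/
structure ASGraph (V : Type*) where
  adj : V → V → Bool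
  /-- `rel u v` is the relationship of `v` as seen from `u`
      (`customer` means `v` is `u`'s customer, etc.). -/
  rel : V → V → Rel
  adj_symm : ∀ u v, adj u v = adj v u
  adj_irrefl : ∀ v, adj v v = false
  rel_consistent : ∀ u v, adj u v = true →
    ((rel u v = Rel.customer ↔ rel v u = Rel.provider) ∧
     (rel u v = Rel.peer ↔ rel v u = Rel.peer))

variable {V : Type*}

def lpRank : Rel → ℕ
  | Rel.customer => 0
  | Rel.peer => 1
  | Rel.provider => 2

/-- The relationship of the next hop of a route (`none` for trivial routes). -/
def nextRel (G : ASGraph V) : List V → Option Rel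
  | a :: b :: _ => some (G.rel a b)
  | _ => none

/-- Local-preference value of a route (customer < peer < provider). -/
def lpVal (G : ASGraph V) : List V → ℕ
  | a :: b :: _ => lpRank (G.rel a b)
  | _ => 0

/-- `R` is a (nonempty) path in `G`. -/
def IsPath (G : ASGraph V) : List V → Prop
  | [] => False
  | [_] => True
  | a :: b :: rest => G.adj a b = true ∧ IsPath G (b :: rest)

/-- `R` is a simple route in `G` ending at `d`. -/
def IsRouteTo (G : ASGraph V) (R : List V) (d : V) : Prop :=
  R.Nodup ∧ IsPath G R ∧ R.getLast? = some d

/-- The export rule (Ex) along a route `a :: b :: c :: …`: each internal AS `b`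
announces its route (with next hop `c`) to `a` only if that route is a customer
route of `b`, or `a` is `b`'s customer. -/
def ExportOK (G : ASGraph V) : List V → Prop
  | a :: b :: c :: rest =>
      (G.rel b c = Rel.customer ∨ G.rel b a = Rel.customer) ∧
      ExportOK G (b :: c :: rest)
  | _ => True

/-- A route is secure iff every AS on it has deployed S*BGP and it does not
contain the attacker (the bogus route is insecure even if the attacker is in `S`). -/
def SecureRoute (S : Finset V) (m : Option V) (R : List V) : Prop :=
  (∀ v ∈ R, v ∈ S) ∧ (∀ m', m = some m' → m' ∉ R)

/-- A legitimate route: ends at the destination `d` and avoids the attacker. -/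
def LegitRoute (m : Option V) (d : V) (R : List V) : Prop :=
  R.getLast? = some d ∧ ∀ m', m = some m' → m' ∉ R

/-- Perceivable routes at `s` for destination `d` when the (optional) attacker `m`
announces the bogus path "m,d": either a genuine export-compliant route to `d`
avoiding `m`, or an export-compliant route to `m` extended by `m`'s claimed
(possibly nonexistent) edge to `d`. -/
def Perceivable (G : ASGraph V) (m : Option V) (d : V) (s : V) (R : List V) : Prop :=
  R.head? = some s ∧
  ((IsRouteTo G R d ∧ ExportOK G R ∧ ∀ m', m = some m' → m' ∉ R) ∨
   (∃ m' R', m = some m' ∧ R = R' ++ [d] ∧ IsRouteTo G R' m' ∧ d ∉ R' ∧ ExportOK G R'))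

/-- The rank of a route (smaller is better), encoding lexicographically the
ranking steps of the given security model: LP (customer > peer > provider),
SP (shorter > longer) and SecP (secure > insecure), in the order determined by
the model.  All components are `< Fintype.card V + 2`, so the encoding is
faithful on simple routes. -/
noncomputable def rankNat [Fintype V] (G : ASGraph V) (S : Finset V) (m : Option V)
    (mdl : SecModel) (R : List V) : ℕ :=
  let B := Fintype.card V + 2
  let lp := lpVal G R
  let len := R.length
  let sec : ℕ := if SecureRoute S m R then 0 else 1
  match mdl with
  | SecModel.first => sec * B * B + lp * B + len
  | SecModel.second => lp * B * B + sec * B + len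
  | SecModel.third => lp * B * B + len * B + sec

/-- `n` exports the route `R` (its currently selected route) to neighbor `s`:
always if `R` is a customer route of `n` or `n` originates `R`; otherwise only
if `s` is `n`'s customer. -/
def exportsTo (G : ASGraph V) (n s : V) : List V → Prop
  | _ :: c :: _ => G.rel n c = Rel.customer ∨ G.rel n s = Rel.customer
  | _ => True

/-- Routes available to `s` given the current selections `σ` of all ASes:
routes exported by neighbors (with BGP loop detection), together with the
attacker's bogus announcement "m,d" to each of its neighbors. -/
def Avail (G : ASGraph V) (m : Option V) (d : V) (σ : V → List V) (s : V)
    (R : List V) : Prop :=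
  (∃ n, G.adj s n = true ∧ (∀ m', m = some m' → n ≠ m') ∧ σ n ≠ [] ∧
      (σ n).head? = some n ∧ s ∉ σ n ∧ exportsTo G n s (σ n) ∧ R = s :: σ n) ∨
  (∃ m', m = some m' ∧ G.adj s m' = true ∧ s ≠ d ∧ R = [s, m', d])

/-- A stable routing state for destination `d`, secure deployment `S`,
attacker `m`, security model `mdl` and tiebreak `tb`: every AS (other than the
destination and the attacker) selects the best available route, where ties in
rank are broken by the strict tiebreak `tb`. -/
def Stable [Fintype V] (G : ASGraph V) (tb : V → List V → ℕ) (S : Finset V)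
    (m : Option V) (d : V) (mdl : SecModel) (σ : V → List V) : Prop :=
  σ d = [d] ∧
  (∀ m', m = some m' → σ m' = []) ∧
  ∀ s, s ≠ d → (∀ m', m = some m' → s ≠ m') →
    ((σ s = [] ∧ ∀ R, ¬ Avail G m d σ s R) ∨
     (Avail G m d σ s (σ s) ∧
      ∀ R, Avail G m d σ s R → R ≠ σ s →
        rankNat G S m mdl (σ s) < rankNat G S m mdl R ∨
        (rankNat G S m mdl (σ s) = rankNat G S m mdl R ∧ tb s (σ s) < tb s R)))

/-- `s` is happy: it selects a legitimate route to `d`, avoiding the attacker. -/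
def Happy (m : Option V) (d : V) (σ : V → List V) (s : V) : Prop :=
  σ s ≠ [] ∧ (σ s).getLast? = some d ∧ ∀ m', m = some m' → m' ∉ σ s

/-- The set of most-preferred perceivable routes of `s` (before the tiebreak step). -/
def BPR [Fintype V] (G : ASGraph V) (S : Finset V) (m : Option V) (d : V)
    (mdl : SecModel) (s : V) (R : List V) : Prop :=
  Perceivable G m d s R ∧
  ∀ R', Perceivable G m d s R' → rankNat G S m mdl R ≤ rankNat G S m mdl R'

/-- The number of happy source ASes (sources other than `m` and `d`). -/
noncomputable def happyCount [Fintype V] [DecidableEq V] (m d : V)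
    (σ : V → List V) : ℕ :=
  (Finset.univ.filter fun s => s ≠ m ∧ s ≠ d ∧ Happy (some m) d σ s).card

/-- The customer-provider hierarchy is acyclic. -/
def Hierarchy (G : ASGraph V) : Prop :=
  ∃ h : V → ℕ, ∀ u v, G.adj u v = true → G.rel u v = Rel.customer → h v < h u

/-- The tiebreak of every AS is deterministic (injective on routes). -/
def InjTB (tb : V → List V → ℕ) : Prop :=
  ∀ s, Function.Injective (tb s)

end SBGP
namespace SBGP

/-!
Induct along `s`'s normal route. Under attack, every AS `v` on it still learns a secure route
from its next hop `n`: by induction `n` selects a secure route, and `n` exports it to `v`,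
because either `v` is `n`'s customer or `n`'s normal route was a customer route, and in the
security first model a secure customer route can only be replaced by another secure customer
route. As every secure route outranks every insecure one, `v` then selects a secure route.
If `v` already lies on `n`'s route, loop detection blocks the announcement, but then `v`'s
route is a suffix of `n`'s and is secure all the same.
-/

section Downgrade

variable {V : Type*}

lemma lpRank_le_two (r : Rel) : lpRank r ≤ 2 := by
  cases r <;> simp [lpRank]

lemma lpVal_le_two (G : ASGraph V) : ∀ R : List V, lpVal G R ≤ 2
  | [] | [_] => by simp [lpVal]
  | _ :: _ :: _ => lpRank_le_two _

lemma eq_customer_of_lpRank_eq_zero {r : Rel} (h : lpRank r = 0) : r = Rel.customer := by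
  cases r <;> simp_all [lpRank]

lemma lpVal_cons_of_head? {G : ASGraph V} {v n : V} {R : List V} (h : R.head? = some n) :
    lpVal G (v :: R) = lpRank (G.rel v n) := by
  obtain ⟨t, rfl⟩ := List.head?_eq_some_iff.mp h
  rfl

lemma exportsTo_iff_of_head? {G : ASGraph V} {v n : V} {R : List V} (h : R.head? = some n) :
    exportsTo G n v R ↔ lpVal G R = 0 ∨ G.rel n v = Rel.customer := by
  obtain ⟨t, rfl⟩ := List.head?_eq_some_iff.mp h
  rcases t with _ | ⟨c, t⟩
  · simp [exportsTo, lpVal]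
  · simp only [exportsTo, lpVal]
    exact or_congr_left ⟨fun h => by rw [h]; rfl, eq_customer_of_lpRank_eq_zero⟩

/-- Prepending a hop never improves the local preference of an exported route:
a non-customer route is exported only to customers, for which the new hop is a provider. -/
lemma lpVal_le_lpVal_cons {G : ASGraph V} {v n : V} {R : List V} (hadj : G.adj v n = true)
    (hhead : R.head? = some n) (hexp : exportsTo G n v R) :
    lpVal G R ≤ lpVal G (v :: R) := by
  rcases (exportsTo_iff_of_head? hhead).mp hexp with h | h
  · exact h ▸ Nat.zero_le _
  · have hprov : G.rel v n = Rel.provider :=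
      (G.rel_consistent n v (by rw [G.adj_symm]; exact hadj)).1.mp h
    rw [lpVal_cons_of_head? hhead, hprov]
    exact lpVal_le_two G R

section SecureRoute

variable {S : Finset V} {mo : Option V} {R R' : List V}

lemma SecureRoute.of_subset (h : SecureRoute S mo R) (hsub : R' ⊆ R) : SecureRoute S mo R' :=
  ⟨fun x hx => h.1 x (hsub hx), fun m' hm' hx => h.2 m' hm' (hsub hx)⟩

lemma SecureRoute.cons {v : V} (h : SecureRoute S mo R) (hv : v ∈ S)
    (hvm : ∀ m', mo = some m' → m' ≠ v) : SecureRoute S mo (v :: R) := by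
  refine ⟨fun x hx => ?_, fun m' hm' hx => ?_⟩
  · rcases List.mem_cons.mp hx with rfl | hx
    exacts [hv, h.1 x hx]
  · rcases List.mem_cons.mp hx with rfl | hx
    exacts [hvm m' hm' rfl, h.2 m' hm' hx]

variable [Fintype V] {G : ASGraph V}

lemma rankNat_first_of_secure (h : SecureRoute S mo R) :
    rankNat G S mo SecModel.first R = lpVal G R * (Fintype.card V + 2) + R.length := by
  simp [rankNat, h]

lemma secureRoute_of_rankNat_first_lt
    (h : rankNat G S mo SecModel.first R < (Fintype.card V + 2) * (Fintype.card V + 2)) :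
    SecureRoute S mo R := by
  by_contra hc
  simp only [rankNat, hc, if_false, one_mul] at h
  omega

lemma lpVal_eq_zero_of_rankNat_first_lt
    (h : rankNat G S mo SecModel.first R < Fintype.card V + 2) : lpVal G R = 0 := by
  have hsec := secureRoute_of_rankNat_first_lt (G := G)
    (h.trans_le (Nat.le_mul_of_pos_left _ (by omega)))
  rw [rankNat_first_of_secure hsec] at h
  by_contra hlp
  have := Nat.le_mul_of_pos_left (Fintype.card V + 2) (Nat.pos_of_ne_zero hlp)
  omega

lemma rankNat_first_lt_sq [Nonempty V] (h : SecureRoute S mo R)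
    (hlen : R.length ≤ Fintype.card V + 1) :
    rankNat G S mo SecModel.first R < (Fintype.card V + 2) * (Fintype.card V + 2) := by
  have hcard : 0 < Fintype.card V := Fintype.card_pos
  have hlp := Nat.mul_le_mul_right (Fintype.card V + 2) (lpVal_le_two G R)
  rw [rankNat_first_of_secure h]
  nlinarith

lemma rankNat_first_lt_cons {v n : V} (hadj : G.adj v n = true) (hhead : R.head? = some n)
    (hexp : exportsTo G n v R) (hsec : SecureRoute S mo (v :: R)) :
    rankNat G S mo SecModel.first R < rankNat G S mo SecModel.first (v :: R) := by
  rw [rankNat_first_of_secure hsec,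
    rankNat_first_of_secure (hsec.of_subset (List.subset_cons_self v R)), List.length_cons]
  have := Nat.mul_le_mul_right (Fintype.card V + 2) (lpVal_le_lpVal_cons hadj hhead hexp)
  omega

end SecureRoute

namespace Stable

variable [Fintype V] {G : ASGraph V} {tb : V → List V → ℕ} {S : Finset V} {mo : Option V}
  {d : V} {mdl : SecModel} {σ : V → List V}

lemma select_le (hst : Stable G tb S mo d mdl σ) {v : V} (hvd : v ≠ d)
    (hvm : ∀ m', mo = some m' → v ≠ m') {R : List V} (hR : Avail G mo d σ v R) :
    σ v ≠ [] ∧ rankNat G S mo mdl (σ v) ≤ rankNat G S mo mdl R := by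
  rcases hst.2.2 v hvd hvm with ⟨-, hno⟩ | ⟨hsel, hmin⟩
  · exact absurd hR (hno R)
  · refine ⟨?_, ?_⟩
    · rcases hsel with ⟨n, -, -, -, -, -, -, h⟩ | ⟨m', -, -, -, h⟩ <;> simp [h]
    · by_cases hRv : R = σ v
      · rw [hRv]
      · rcases hmin R hR hRv with h | ⟨h, -⟩ <;> exact h.le

lemma eq_dest_or_cons (hst : Stable G tb S mo d mdl σ) {v : V} (hne : σ v ≠ [])
    (hmf : ∀ m', mo = some m' → m' ∉ σ v) :
    (v = d ∧ σ v = [d]) ∨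
      (v ≠ d ∧ ∃ n, G.adj v n = true ∧ v ∉ σ n ∧ σ n ≠ [] ∧
        (σ n).head? = some n ∧ exportsTo G n v (σ n) ∧ σ v = v :: σ n) := by
  by_cases hvd : v = d
  · exact Or.inl ⟨hvd, hvd ▸ hst.1⟩
  have hvm : ∀ m', mo = some m' → v ≠ m' := fun m' hm' hv =>
    hne (by rw [hv, hst.2.1 m' hm'])
  rcases hst.2.2 v hvd hvm with ⟨h, -⟩ | ⟨hsel, -⟩
  · exact absurd h hne
  rcases hsel with ⟨n, hadj, -, hnne, hhead, hvn, hexp, h⟩ | ⟨m', hm', -, -, h⟩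
  · exact Or.inr ⟨hvd, n, hadj, hvn, hnne, hhead, hexp, h⟩
  · exact absurd (by rw [h]; simp) (hmf m' hm')

lemma head?_eq (hst : Stable G tb S mo d mdl σ) {v : V} (hne : σ v ≠ [])
    (hmf : ∀ m', mo = some m' → m' ∉ σ v) : (σ v).head? = some v := by
  rcases hst.eq_dest_or_cons hne hmf with ⟨rfl, h⟩ | ⟨-, n, -, -, -, -, -, h⟩ <;> simp [h]

lemma getLast?_eq_and_nodup (hst : Stable G tb S mo d mdl σ) {v : V} (hne : σ v ≠ [])
    (hmf : ∀ m', mo = some m' → m' ∉ σ v) : (σ v).getLast? = some d ∧ (σ v).Nodup := by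
  generalize hR : σ v = R at hne hmf
  induction R generalizing v with
  | nil => exact absurd rfl hne
  | cons x t ih =>
    rcases hst.eq_dest_or_cons (hR ▸ hne) (hR ▸ hmf) with
      ⟨-, h⟩ | ⟨-, n, -, hvn, hnne, -, -, h⟩
    · rw [← hR, h]
      simp
    · rw [hR] at h
      obtain ⟨hxv, rfl⟩ := List.cons.inj h
      subst x
      obtain ⟨hlast, hnd⟩ :=
        ih rfl hnne fun m' hm' hx => hmf m' hm' (List.mem_cons_of_mem _ hx)
      obtain ⟨c, t, hct⟩ := List.exists_cons_of_ne_nil hnne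
      rw [hct] at hlast hvn hnd ⊢
      exact ⟨by rwa [List.getLast?_cons_cons], List.nodup_cons.mpr ⟨hvn, hnd⟩⟩

lemma happy (hst : Stable G tb S mo d mdl σ) {v : V} (hne : σ v ≠ [])
    (hmf : ∀ m', mo = some m' → m' ∉ σ v) : Happy mo d σ v :=
  ⟨hne, (hst.getLast?_eq_and_nodup hne hmf).1, hmf⟩

lemma rankNat_first_le_of_mem (hst : Stable G tb S mo d SecModel.first σ) {v w : V}
    (hne : σ v ≠ []) (hsec : SecureRoute S mo (σ v)) (hw : w ∈ σ v) :
    σ w ≠ [] ∧ SecureRoute S mo (σ w) ∧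
      rankNat G S mo SecModel.first (σ w) ≤ rankNat G S mo SecModel.first (σ v) := by
  generalize hR : σ v = R at hne hsec hw
  induction R generalizing v with
  | nil => exact absurd rfl hne
  | cons x t ih =>
    by_cases hwv : w = v
    · subst hwv
      exact ⟨hR ▸ hne, hR ▸ hsec, (congrArg _ hR).le⟩
    rcases hst.eq_dest_or_cons (hR ▸ hne) (hR ▸ hsec.2) with
      ⟨rfl, h⟩ | ⟨-, n, hadj, -, hnne, hhead, hexp, h⟩
    · rw [hR] at h
      rw [h, List.mem_singleton] at hw
      exact absurd hw hwv
    · rw [hR] at h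
      obtain ⟨hxv, rfl⟩ := List.cons.inj h
      subst x
      have hw' : w ∈ σ n := (List.mem_cons.mp hw).resolve_left hwv
      obtain ⟨hwne, hwsec, hle⟩ :=
        ih rfl hnne (hsec.of_subset (List.subset_cons_self _ _)) hw'
      exact ⟨hwne, hwsec, hle.trans (hR ▸ (rankNat_first_lt_cons hadj hhead hexp hsec).le)⟩

lemma secure_and_rankNat_first_le_cons (hst : Stable G tb S mo d SecModel.first σ) {v n : V}
    (hvd : v ≠ d) (hadj : G.adj v n = true) (hnne : σ n ≠ [])
    (hsec : SecureRoute S mo (v :: σ n)) (hexp : exportsTo G n v (σ n)) :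
    σ v ≠ [] ∧ SecureRoute S mo (σ v) ∧
      rankNat G S mo SecModel.first (σ v) ≤ rankNat G S mo SecModel.first (v :: σ n) := by
  have : Nonempty V := ⟨v⟩
  have hsecn := hsec.of_subset (List.subset_cons_self v (σ n))
  have hhead := hst.head?_eq hnne hsecn.2
  have hlt : rankNat G S mo SecModel.first (v :: σ n)
      < (Fintype.card V + 2) * (Fintype.card V + 2) :=
    rankNat_first_lt_sq hsec
      (by simpa using (hst.getLast?_eq_and_nodup hnne hsecn.2).2.length_le_card)
  suffices h : σ v ≠ [] ∧
      rankNat G S mo SecModel.first (σ v) ≤ rankNat G S mo SecModel.first (v :: σ n) from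
    ⟨h.1, secureRoute_of_rankNat_first_lt (h.2.trans_lt hlt), h.2⟩
  by_cases hloop : v ∈ σ n
  · obtain ⟨hvne, -, hle⟩ := hst.rankNat_first_le_of_mem hnne hsecn hloop
    exact ⟨hvne, hle.trans (rankNat_first_lt_cons hadj hhead hexp hsec).le⟩
  · have hnm : ∀ m', mo = some m' → n ≠ m' := fun m' hm' hn =>
      hsecn.2 m' hm' (hn ▸ List.mem_of_mem_head? hhead)
    have hvm : ∀ m', mo = some m' → v ≠ m' := fun m' hm' hv =>
      hsec.2 m' hm' (hv ▸ List.mem_cons_self)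
    exact hst.select_le hvd hvm (Or.inl ⟨n, hadj, hnm, hnne, hhead, hloop, hexp, rfl⟩)

end Stable

/-- Customer routes are tracked too, because they are the routes exported to every neighbor. -/
lemma secureRoute_of_secureRoute_normal [Fintype V] {G : ASGraph V} {tb : V → List V → ℕ}
    {S : Finset V} {m d : V} {σN σA : V → List V}
    (hN : Stable G tb S none d SecModel.first σN)
    (hA : Stable G tb S (some m) d SecModel.first σA) {v : V}
    (hne : σN v ≠ []) (hsec : SecureRoute S (some m) (σN v)) :
    σA v ≠ [] ∧ SecureRoute S (some m) (σA v) ∧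
      (lpVal G (σN v) = 0 → lpVal G (σA v) = 0) := by
  generalize hR : σN v = R at hne hsec
  induction R generalizing v with
  | nil => exact absurd rfl hne
  | cons x t ih =>
    rcases hN.eq_dest_or_cons (hR ▸ hne) (fun _ h => nomatch h) with
      ⟨rfl, h⟩ | ⟨hvd, n, hadj, -, hnne, hhead, hexp, h⟩
    · rw [hR] at h
      rw [hA.1]
      exact ⟨List.cons_ne_nil _ _, h ▸ hsec, fun _ => rfl⟩
    rw [hR] at h
    obtain ⟨hxv, rfl⟩ := List.cons.inj h
    subst x
    obtain ⟨hAne, hAsec, hAlp⟩ := ih rfl hnne (hsec.of_subset (List.subset_cons_self _ _))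
    have hAhead := hA.head?_eq hAne hAsec.2
    have hexpA : exportsTo G n v (σA n) := by
      rw [exportsTo_iff_of_head? hAhead]
      exact ((exportsTo_iff_of_head? hhead).mp hexp).imp_left hAlp
    have hsecv : SecureRoute S (some m) (v :: σA n) :=
      hAsec.cons (hsec.1 v List.mem_cons_self)
        (by rintro _ ⟨⟩ rfl; exact hsec.2 _ rfl List.mem_cons_self)
    obtain ⟨hvne, hvsec, hle⟩ := hA.secure_and_rankNat_first_le_cons hvd hadj hAne hsecv hexpA
    refine ⟨hvne, hvsec, fun hlp => lpVal_eq_zero_of_rankNat_first_lt (hle.trans_lt ?_)⟩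
    have hlpA : lpVal G (v :: σA n) = 0 := by
      rwa [lpVal_cons_of_head? hAhead, ← lpVal_cons_of_head? hhead]
    have hlen := (hA.getLast?_eq_and_nodup hAne hAsec.2).2.length_le_card
    rw [rankNat_first_of_secure hsecv, hlpA, List.length_cons]
    omega

end Downgrade

theorem no_downgrade_first_general {V : Type*} [Fintype V]
    (G : ASGraph V) (tb : V → List V → ℕ)
    (m d : V) (S : Finset V)
    (σN σA : V → List V)
    (hN : Stable G tb S none d SecModel.first σN)
    (hA : Stable G tb S (some m) d SecModel.first σA)
    (s : V)
    (hnormal : Happy none d σN s)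
    (hsec : SecureRoute S none (σN s))
    (havoid : m ∉ σN s) :
    SecureRoute S (some m) (σA s) ∧ Happy (some m) d σA s := by
  have hsecm : SecureRoute S (some m) (σN s) := ⟨hsec.1, by rintro _ ⟨⟩; exact havoid⟩
  obtain ⟨hne, hsecA, -⟩ := secureRoute_of_secureRoute_normal hN hA hnormal.1 hsecm
  exact ⟨hsecA, hA.happy hne hsecA.2⟩

/-- **No protocol downgrade attacks in the security first model.**
For every attacker `m`, destination `d` and source `s` that, under normal
conditions (no attack), uses a secure route to `d` not passing through `m`,
the source `s` continues to use a secure route to `d` during `m`'s attack. -/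
theorem no_downgrade_first {V : Type*} [Fintype V] [DecidableEq V]
    (G : ASGraph V) (tb : V → List V → ℕ) (hinj : InjTB tb)
    (m d : V) (S : Finset V)
    (σN σA : V → List V)
    (hN : Stable G tb S none d SecModel.first σN)
    (hA : Stable G tb S (some m) d SecModel.first σA)
    (s : V)
    (hnormal : Happy none d σN s)
    (hsec : SecureRoute S none (σN s))
    (havoid : m ∉ σN s) :
    SecureRoute S (some m) (σA s) ∧ Happy (some m) d σA s :=
  no_downgrade_first_general G tb m d S σN σA hN hA s hnormal hsec havoid

end SBGP
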